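/- Let κ > 0, k ∈ ℝ² with |k| = κ, let θ be a unit vector, let τ > 0, and set D = 2 sin(τ(κ − k·θ)); assume D ≠ 0. Let f₀ ∈ ℂ and let a : (0,∞) → ℂ be a function such that a(s) − √(2/(πκ)) ( e^{i(κs − s(k·θ) − π/4)} f₀ + e^{−i(κs − s(k·θ) − π/4)} \overline{f₀} ) = O(s^{−1/2}) as s → ∞. Then (i √(πκ/2) / D) ( e^{i((s+τ)(k·θ) − κ(s+τ) + π/4)} a(s) − e^{i(s(k·θ) − κs + π/4)} a(s+τ) ) − f₀ = O(s^{−1/2}) as s → ∞; in particular this expression converges to f₀ as s → ∞. -/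

import Mathlib

open Complex Filter Asymptotics RealInnerProductSpace

noncomputable section

/-- The plane ℝ². -/
abbrev E2 := EuclideanSpace ℝ (Fin 2)

/-- The leading oscillatory term `√(2/(πκ)) (e^{i(κs − s k·θ − π/4)} f₀ + e^{−i(κs − s k·θ − π/4)} f̄₀)`
of the normalized intensity deviation. -/
def oscTerm (κ kθ : ℝ) (f₀ : ℂ) (s : ℝ) : ℂ :=
  (Real.sqrt (2 / (Real.pi * κ)) : ℂ) *
    (Complex.exp (Complex.I * ((κ * s - s * kθ - Real.pi / 4 : ℝ) : ℂ)) * f₀ +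
      Complex.exp (-(Complex.I * ((κ * s - s * kθ - Real.pi / 4 : ℝ) : ℂ))) * (starRingEnd ℂ) f₀)

private theorem keyAlg (C c D sδ f₀ g₁ g₂ u v d e : ℂ) (hCc : C * c = 1) (hD : D = 2 * sδ)
    (hD0 : D ≠ 0) (huv : u * v = 1)
    (hdinv : e - d = -(2 * Complex.I * sδ)) :
    Complex.I * C / D * (v * e * (g₁ + c * (u * f₀ + v * (starRingEnd ℂ) f₀))
      - v * (g₂ + c * (u * d * f₀ + v * e * (starRingEnd ℂ) f₀))) - f₀
    = Complex.I * C / D * (v * e * g₁ - v * g₂) := by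
  subst hD
  rw [div_eq_mul_inv]
  have hw : 2 * sδ * (2 * sδ)⁻¹ = 1 := mul_inv_cancel₀ hD0
  linear_combination (Complex.I*C*(2 * sδ)⁻¹*c*f₀*(e-d))*huv + (Complex.I*C*(2 * sδ)⁻¹*c*f₀)*hdinv +
    (-2*C*c*(2 * sδ)⁻¹*f₀*sδ)*Complex.I_sq + (2*(2 * sδ)⁻¹*sδ*f₀)*hCc + f₀*hw

set_option maxHeartbeats 1000000

/-- Formula (4.3): recovery of the leading far-field coefficient `f₀` from the normalized
intensity deviation `a` along the ray, up to `O(s^{-1/2})`. -/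
theorem farfield_leading_coefficient_recovery
    (κ : ℝ) (hκ : 0 < κ) (k θ : E2) (hk : ‖k‖ = κ) (hθ : ‖θ‖ = 1)
    (τ : ℝ) (hτ : 0 < τ)
    (D : ℝ) (hD : D = 2 * Real.sin (τ * (κ - ⟪k, θ⟫))) (hD0 : D ≠ 0)
    (f₀ : ℂ) (a : ℝ → ℂ)
    (ha : (fun s : ℝ => a s - oscTerm κ ⟪k, θ⟫ f₀ s) =O[atTop]
      fun s : ℝ => s ^ (-(1 : ℝ) / 2)) :
    ((fun s : ℝ =>
        Complex.I * (Real.sqrt (Real.pi * κ / 2) : ℂ) / (D : ℂ) *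
          (Complex.exp (Complex.I * (((s + τ) * ⟪k, θ⟫ - κ * (s + τ) + Real.pi / 4 : ℝ) : ℂ)) * a s -
            Complex.exp (Complex.I * ((s * ⟪k, θ⟫ - κ * s + Real.pi / 4 : ℝ) : ℂ)) * a (s + τ)) - f₀)
      =O[atTop] fun s : ℝ => s ^ (-(1 : ℝ) / 2)) ∧
    Tendsto (fun s : ℝ =>
        Complex.I * (Real.sqrt (Real.pi * κ / 2) : ℂ) / (D : ℂ) *
          (Complex.exp (Complex.I * (((s + τ) * ⟪k, θ⟫ - κ * (s + τ) + Real.pi / 4 : ℝ) : ℂ)) * a s -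
            Complex.exp (Complex.I * ((s * ⟪k, θ⟫ - κ * s + Real.pi / 4 : ℝ) : ℂ)) * a (s + τ)))
      atTop (nhds f₀) := by
  set kθ : ℝ := ⟪k, θ⟫ with hkθ
  set g : ℝ → ℂ := fun s => a s - oscTerm κ kθ f₀ s with hg
  set C : ℂ := (Real.sqrt (Real.pi * κ / 2) : ℂ) with hC
  set c : ℂ := (Real.sqrt (2 / (Real.pi * κ)) : ℂ) with hc
  have hπκ : 0 < Real.pi * κ := mul_pos Real.pi_pos hκ
  have hCc : C * c = 1 := by
    rw [hC, hc, ← Complex.ofReal_mul, ← Real.sqrt_mul (by positivity)]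
    rw [show Real.pi * κ / 2 * (2 / (Real.pi * κ)) = 1 by field_simp]
    simp
  set δ : ℝ := τ * (κ - kθ) with hδ
  set u : ℝ → ℂ := fun s => Complex.exp (Complex.I * ((κ * s - s * kθ - Real.pi / 4 : ℝ) : ℂ)) with hu
  set v : ℝ → ℂ := fun s => Complex.exp (-(Complex.I * ((κ * s - s * kθ - Real.pi / 4 : ℝ) : ℂ))) with hv
  set d : ℂ := Complex.exp (Complex.I * (δ : ℂ)) with hdd
  set e : ℂ := Complex.exp (-(Complex.I * (δ : ℂ))) with hee
  have huv : ∀ s : ℝ, u s * v s = 1 := by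
    intro s; rw [hu, hv, ← Complex.exp_add]; simp
  have hdinv : e - d = -(2 * Complex.I * ((Real.sin δ : ℝ) : ℂ)) := by
    rw [hee, hdd, show Complex.I * (δ : ℂ) = (δ : ℂ) * Complex.I by ring,
      show -((δ : ℂ) * Complex.I) = ((-δ : ℝ) : ℂ) * Complex.I by push_cast; ring,
      Complex.exp_mul_I, Complex.exp_mul_I, ← Complex.ofReal_sin, ← Complex.ofReal_cos,
      ← Complex.ofReal_sin, ← Complex.ofReal_cos, Real.sin_neg, Real.cos_neg]
    push_cast; ring
  -- exponent identities
  have he1 : ∀ s : ℝ,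
      Complex.exp (Complex.I * (((s + τ) * kθ - κ * (s + τ) + Real.pi / 4 : ℝ) : ℂ)) = v s * e := by
    intro s
    rw [hv, hee, ← Complex.exp_add]; congr 1; rw [hδ]; push_cast; ring
  have he2 : ∀ s : ℝ,
      Complex.exp (Complex.I * ((s * kθ - κ * s + Real.pi / 4 : ℝ) : ℂ)) = v s := by
    intro s
    rw [hv]; congr 1; push_cast; ring
  have hud : ∀ s : ℝ, u (s + τ) = u s * d := by
    intro s; simp only [hu, hdd]; rw [← Complex.exp_add]; congr 1; rw [hδ]; push_cast; ring
  have hve : ∀ s : ℝ, v (s + τ) = v s * e := by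
    intro s; simp only [hv, hee]; rw [← Complex.exp_add]; congr 1; rw [hδ]; push_cast; ring
  have hosc : ∀ s : ℝ, oscTerm κ kθ f₀ s = c * (u s * f₀ + v s * (starRingEnd ℂ) f₀) := by
    intro s; rw [oscTerm, hu, hv, hc]
  have hDC : (D : ℂ) = 2 * ((Real.sin δ : ℝ) : ℂ) := by
    rw [hD, hδ]; push_cast; ring
  -- pointwise identity
  have key : ∀ s : ℝ,
      Complex.I * C / (D : ℂ) *
        (Complex.exp (Complex.I * (((s + τ) * kθ - κ * (s + τ) + Real.pi / 4 : ℝ) : ℂ)) * a s -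
          Complex.exp (Complex.I * ((s * kθ - κ * s + Real.pi / 4 : ℝ) : ℂ)) * a (s + τ)) - f₀
      = Complex.I * C / (D : ℂ) * (v s * e * g s - v s * g (s + τ)) := by
    intro s
    have ha1 : a s = g s + c * (u s * f₀ + v s * (starRingEnd ℂ) f₀) := by
      rw [hg]; simp [hosc s]
    have ha2 : a (s + τ) = g (s + τ) + c * (u s * d * f₀ + v s * e * (starRingEnd ℂ) f₀) := by
      rw [hg]; simp only [hosc (s + τ), hud s, hve s]; ring
    rw [he1 s, he2 s, ha1, ha2]
    exact keyAlg C c (D : ℂ) ((Real.sin δ : ℝ) : ℂ) f₀ (g s) (g (s + τ)) (u s) (v s) d e hCc hDC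
      (by exact_mod_cast hD0) (huv s) hdinv
  have hnorm : ∀ s : ℝ, ‖v s‖ = 1 := by
    intro s
    rw [hv, Complex.norm_exp]
    simp
  have hnorme : ‖e‖ = 1 := by
    rw [hee, Complex.norm_exp]
    simp
  -- big-O estimates
  have h1 : (fun s : ℝ => v s * e * g s) =O[atTop] fun s : ℝ => s ^ (-(1 : ℝ) / 2) := by
    refine (IsBigO.of_bound 1 ?_).trans ha
    filter_upwards with s
    rw [norm_mul, norm_mul, hnorm s, hnorme]
    simp [hg]
  have hshift : (fun s : ℝ => (s + τ) ^ (-(1 : ℝ) / 2)) =O[atTop]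
      fun s : ℝ => s ^ (-(1 : ℝ) / 2) := by
    refine IsBigO.of_bound 1 ?_
    filter_upwards [eventually_gt_atTop 0] with s hs
    have h1 : (0:ℝ) < s + τ := by linarith
    rw [one_mul, Real.norm_eq_abs, Real.norm_eq_abs, abs_of_pos (Real.rpow_pos_of_pos h1 _),
      abs_of_pos (Real.rpow_pos_of_pos hs _)]
    exact Real.rpow_le_rpow_of_nonpos hs (by linarith) (by norm_num)
  have h2 : (fun s : ℝ => v s * g (s + τ)) =O[atTop] fun s : ℝ => s ^ (-(1 : ℝ) / 2) := by
    refine (IsBigO.of_bound 1 ?_).trans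
      ((ha.comp_tendsto (tendsto_atTop_add_const_right atTop τ tendsto_id)).trans hshift)
    filter_upwards with s
    rw [norm_mul, hnorm s]
    simp [hg, Function.comp]
  have hbigO : (fun s : ℝ =>
      Complex.I * C / (D : ℂ) *
        (Complex.exp (Complex.I * (((s + τ) * kθ - κ * (s + τ) + Real.pi / 4 : ℝ) : ℂ)) * a s -
          Complex.exp (Complex.I * ((s * kθ - κ * s + Real.pi / 4 : ℝ) : ℂ)) * a (s + τ)) - f₀)
      =O[atTop] fun s : ℝ => s ^ (-(1 : ℝ) / 2) := by
    have := ((h1.sub h2).const_mul_left (Complex.I * C / (D : ℂ)))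
    refine this.congr' ?_ (by rfl)
    filter_upwards with s using (key s).symm
  refine ⟨hbigO, ?_⟩
  have hlim0 : Tendsto (fun s : ℝ => s ^ (-(1 : ℝ) / 2)) atTop (nhds (0 : ℝ)) := by
    have : (-(1 : ℝ) / 2) = -(1 / 2 : ℝ) := by norm_num
    rw [this]
    exact tendsto_rpow_neg_atTop (by norm_num)
  have h0 := hbigO.trans_tendsto hlim0
  have := h0.add_const f₀
  simpa using this
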